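/- Let m ≥ 2 and let c, n be natural numbers with (c+1)·(m−1) ≤ n. Let A be the set of vectors x = (x_1,…,x_m) ∈ ℕ^m with x_1 + ⋯ + x_m = n such that there exists an index w with x_i − x_w ≥ c + 1 for every i ≠ w. Then |A| / C(n+m−1, m−1) ≥ ((n − (c+1)(m−1) + 1)/(mn − (c+1)(m−1)))^{(c+1)(m−1)}. -/

import Mathlib

/-!
Write `d = m - 1`, `k = (c + 1) * d` and `n = s + k`. Adding `c + 1` vetoes to every candidate
except one with the fewest vetoes maps profiles of `s` voters injectively to `c`-collusion-proof
profiles of `n` voters (the untouched candidate is the unique minimum afterwards), so by stars and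
bars the fraction is at least `C(s + d, d) / C(s + k + d, d) = ∏_{i=1}^k (s + i) / (s + i + d)`,
which is at least `((s + 1) / (s + 1 + d)) ^ k`. For `n ≥ 2` this base dominates
`(n - k + 1) / (m n - k)`; the remaining case `n = 1` forces `m = 2`, `c = 0`, where every profile
is collusion-proof.
-/

open Finset

section Lift

variable {ι : Type*} [DecidableEq ι] [Nonempty ι]

noncomputable def liftNonArgmin (c : ℕ) (y : ι → ℕ) : ι → ℕ :=
  fun i => y i + if i = Function.argmin y then 0 else c + 1

lemma liftNonArgmin_isMin_iff (c : ℕ) (y : ι → ℕ) (i : ι) :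
    (∀ j, liftNonArgmin c y i ≤ liftNonArgmin c y j) ↔ i = Function.argmin y := by
  have hmin := Function.argmin_le y
  constructor
  · intro h
    by_contra hi
    have := h (Function.argmin y)
    simp only [liftNonArgmin, hi, if_true, if_false] at this
    have := hmin i
    omega
  · rintro rfl j
    have := hmin j
    simp only [liftNonArgmin, if_true]
    split <;> omega

end Lift

section Profiles

variable (ι : Type*) [Fintype ι]

def scoringProfiles (n : ℕ) : Set (ι → ℕ) := {x | ∑ i, x i = n}

def collusionProofProfiles (c n : ℕ) : Set (ι → ℕ) :=
  {x | ∑ i, x i = n ∧ ∃ w, ∀ i, i ≠ w → x w + c + 1 ≤ x i}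

lemma ncard_scoringProfiles (n : ℕ) :
    (scoringProfiles ι n).ncard = (Fintype.card ι + n - 1).choose n := by
  classical
  rw [← Nat.card_coe_set_eq, scoringProfiles, Set.coe_ofPred,
    ← Nat.card_congr (Sym.equivNatSumOfFintype ι n), Sym.natCard_sym_eq_choose,
    Nat.card_eq_fintype_card]

lemma scoringProfiles_finite (n : ℕ) : (scoringProfiles ι n).Finite := by
  classical
  exact Set.finite_coe_iff.mp (Finite.of_equiv _ (Sym.equivNatSumOfFintype ι n))

lemma collusionProofProfiles_subset (c n : ℕ) :
    collusionProofProfiles ι c n ⊆ scoringProfiles ι n := fun _ hx => hx.1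

variable {ι}

def lowerNonMinimal (c : ℕ) (x : ι → ℕ) : ι → ℕ :=
  fun i => if ∀ j, x i ≤ x j then x i else x i - (c + 1)

variable [DecidableEq ι] [Nonempty ι] (c : ℕ)

lemma leftInverse_lowerNonMinimal_liftNonArgmin :
    Function.LeftInverse (lowerNonMinimal c) (liftNonArgmin (ι := ι) c) := by
  intro y
  funext i
  simp only [lowerNonMinimal, liftNonArgmin_isMin_iff]
  by_cases hi : i = Function.argmin y <;> simp [liftNonArgmin, hi]

lemma sum_liftNonArgmin (y : ι → ℕ) :
    ∑ i, liftNonArgmin c y i = ∑ i, y i + (Fintype.card ι - 1) * (c + 1) := by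
  simp [liftNonArgmin, sum_add_distrib, sum_ite, filter_ne', card_erase_of_mem]

lemma liftNonArgmin_mem {n : ℕ} {y : ι → ℕ} (hy : y ∈ scoringProfiles ι n) :
    liftNonArgmin c y ∈ collusionProofProfiles ι c (n + (Fintype.card ι - 1) * (c + 1)) := by
  refine ⟨by rw [sum_liftNonArgmin, hy], Function.argmin y, fun i hi => ?_⟩
  have := Function.argmin_le y i
  simp only [liftNonArgmin, hi, if_true, if_false]
  omega

lemma ncard_scoringProfiles_le (n : ℕ) :
    (scoringProfiles ι n).ncard ≤
      (collusionProofProfiles ι c (n + (Fintype.card ι - 1) * (c + 1))).ncard :=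
  Set.ncard_le_ncard_of_injOn _ (fun _ hy => liftNonArgmin_mem c hy)
    (leftInverse_lowerNonMinimal_liftNonArgmin c).injective.injOn
    ((scoringProfiles_finite ι _).subset (collusionProofProfiles_subset ι _ _))

end Profiles

lemma collusionProofProfiles_fin_two_zero {n : ℕ} (hn : Odd n) :
    collusionProofProfiles (Fin 2) 0 n = scoringProfiles (Fin 2) n := by
  refine (collusionProofProfiles_subset _ _ _).antisymm fun x hx => ⟨hx, ?_⟩
  obtain ⟨t, rfl⟩ := hn
  simp only [scoringProfiles, Set.mem_ofPred_eq, Fin.sum_univ_two] at hx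
  obtain h | h : x 0 < x 1 ∨ x 1 < x 0 := by omega
  · exact ⟨0, Fin.forall_fin_two.mpr ⟨fun hne => (hne rfl).elim, fun _ => by omega⟩⟩
  · exact ⟨1, Fin.forall_fin_two.mpr ⟨fun _ => by omega, fun hne => (hne rfl).elim⟩⟩

lemma pow_mul_choose_le (s d k : ℕ) :
    (s + 1) ^ k * (s + k + d).choose d ≤ (s + 1 + d) ^ k * (s + d).choose d := by
  induction k with
  | zero => simp
  | succ k ih =>
    have hstep := Nat.choose_mul_succ_eq (s + k + d) d
    rw [show s + k + d + 1 - d = s + k + 1 by omega] at hstep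
    refine Nat.le_of_mul_le_mul_right ?_ (Nat.succ_pos (s + k))
    calc (s + 1) ^ (k + 1) * (s + (k + 1) + d).choose d * (s + k + 1)
        = (s + 1) * ((s + 1) ^ k * (s + k + d).choose d) * (s + k + d + 1) := by
          rw [show s + (k + 1) + d = s + k + d + 1 by omega, mul_assoc _ _ (s + k + 1), ← hstep]
          ring
      _ ≤ (s + 1) * ((s + 1 + d) ^ k * (s + d).choose d) * (s + k + d + 1) := by gcongr
      _ ≤ (s + 1 + d) ^ (k + 1) * (s + d).choose d * (s + k + 1) := by
          have hfactor : (s + 1) * (s + k + d + 1) ≤ (s + 1 + d) * (s + k + 1) := by nlinarith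
          calc _ = (s + 1 + d) ^ k * (s + d).choose d * ((s + 1) * (s + k + d + 1)) := by ring
            _ ≤ (s + 1 + d) ^ k * (s + d).choose d * ((s + 1 + d) * (s + k + 1)) := by gcongr
            _ = _ := by ring

lemma div_pow_le_choose_div_choose (s d k : ℕ) :
    ((s + 1 : ℝ) / (s + 1 + d)) ^ k ≤ (s + d).choose d / (s + k + d).choose d := by
  rw [div_pow, div_le_div_iff₀ (by positivity) (by exact_mod_cast Nat.choose_pos (by omega))]
  rw [mul_comm ((s + d).choose d : ℝ)]
  exact_mod_cast pow_mul_choose_le s d k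

/-- For veto with `m ≥ 2` candidates, `n` voters and coalition size `c` with
`(c+1)(m-1) ≤ n`, the fraction of scoring profiles in which some candidate has at least
`c + 1` fewer vetoes than every other candidate is at least
`((n - (c+1)(m-1) + 1)/(mn - (c+1)(m-1)))^((c+1)(m-1))`. -/
theorem veto_collusion_proof_fraction (m c n : ℕ) (hm : 2 ≤ m)
    (hcn : (c + 1) * (m - 1) ≤ n) :
    (((n : ℝ) - ((c + 1) * (m - 1) : ℕ) + 1) /
        ((m : ℝ) * (n : ℝ) - ((c + 1) * (m - 1) : ℕ))) ^ ((c + 1) * (m - 1)) ≤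
      (({x : Fin m → ℕ | (∑ i, x i) = n ∧
          ∃ w : Fin m, ∀ i : Fin m, i ≠ w → x w + c + 1 ≤ x i}).ncard : ℝ) /
        (Nat.choose (n + m - 1) (m - 1) : ℝ) := by
  obtain ⟨d, rfl⟩ : ∃ d, m = d + 1 := ⟨m - 1, by omega⟩
  set k := (c + 1) * d with hk
  obtain ⟨s, rfl⟩ : ∃ s, n = s + k := ⟨n - k, by simp only [Nat.add_sub_cancel] at hcn; omega⟩
  change _ ≤ ((collusionProofProfiles (Fin (d + 1)) c (s + k)).ncard : ℝ) / _
  simp only [Nat.add_sub_cancel, ← hk, show s + k + (d + 1) - 1 = s + k + d by omega]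
  rw [show ((s + k : ℕ) : ℝ) - k + 1 = s + 1 by push_cast; ring,
    show ((d + 1 : ℕ) : ℝ) * (s + k : ℕ) - k = d * (s + k) + s by push_cast; ring]
  have hk_pos : 0 < k := Nat.mul_pos c.succ_pos (by omega : 0 < d)
  obtain hn | hn : s + k = 1 ∨ 2 ≤ s + k := by omega
  · obtain ⟨rfl, hk1⟩ : s = 0 ∧ k = 1 := by omega
    obtain ⟨hc, rfl⟩ := mul_eq_one.mp (hk ▸ hk1)
    obtain rfl : c = 0 := by omega
    simp [hk1, collusionProofProfiles_fin_two_zero odd_one, ncard_scoringProfiles]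
  · have hcount := ncard_scoringProfiles_le c (ι := Fin (d + 1)) s
    rw [ncard_scoringProfiles, Fintype.card_fin, show d + 1 + s - 1 = s + d by omega,
      Nat.choose_symm_add, Nat.add_sub_cancel, mul_comm] at hcount
    have hden_le : s + 1 + d ≤ d * (s + k) + s := by nlinarith
    calc ((s + 1 : ℝ) / (d * (s + k) + s)) ^ k ≤ ((s + 1 : ℝ) / (s + 1 + d)) ^ k := by
          gcongr ((s + 1 : ℝ) / ?_) ^ k; exact_mod_cast hden_le
      _ ≤ (s + d).choose d / (s + k + d).choose d := div_pow_le_choose_div_choose s d k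
      _ ≤ _ := by gcongr
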